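/- arXiv:2401.07069 — 4 statements merged into one kernel-verified Lean document; each statement's English description precedes it below -/
import Mathlib

section
/- Let S ⊆ U_{6n} ∖ {1} with S = S^{−1}. For each integer j with 0 ≤ j ≤ 2n−1, the complex number χ_j(S) = ∑_{s∈S} χ_j(s) is an eigenvalue of the adjacency matrix of the Cayley graph Cay(U_{6n}, S), regarded as a matrix over ℂ. -/
open Complex SemidirectProduct Polynomial
open scoped Pointwise

namespace U6nPaper

/-- The inversion automorphism of `Multiplicative (ZMod 3)`. -/
def iota : MulAut (Multiplicative (ZMod 3)) :=
  { toFun := fun x => x⁻¹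
    invFun := fun x => x⁻¹
    left_inv := fun x => inv_inv x
    right_inv := fun x => inv_inv x
    map_mul' := fun x y => mul_inv x y }

lemma iota_sq : iota ^ 2 = 1 := by
  ext x
  simp [sq, iota]

/-- The homomorphism `ZMod 2 → Aut(ZMod 3)` sending `1` to inversion. -/
def sgn2 : Multiplicative (ZMod 2) →* MulAut (Multiplicative (ZMod 3)) where
  toFun x := iota ^ (Multiplicative.toAdd x).val
  map_one' := by simp
  map_mul' x y := by
    simp only [toAdd_mul, ZMod.val_add, ← pow_eq_pow_mod _ iota_sq, pow_add]

/-- The action of `ZMod (2n)` on `ZMod 3` where `r` acts by multiplication by `(-1)^r`. -/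
def phi (n : ℕ) : Multiplicative (ZMod (2 * n)) →* MulAut (Multiplicative (ZMod 3)) :=
  sgn2.comp (AddMonoidHom.toMultiplicative
    ((ZMod.castHom ⟨n, rfl⟩ (ZMod 2)).toAddMonoidHom))

/-- The group `U_{6n} = ⟨a, b ∣ a^{2n} = b³ = 1, a⁻¹ba = b⁻¹⟩`, realized as the semidirect
product `ZMod 3 ⋊ ZMod (2n)`. -/
abbrev U6n (n : ℕ) := Multiplicative (ZMod 3) ⋊[phi n] Multiplicative (ZMod (2 * n))

/-- The generator `a` of `U_{6n}` (of order `2n`). -/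
def aU (n : ℕ) : U6n n := inr (Multiplicative.ofAdd (1 : ZMod (2 * n)))

/-- The generator `b` of `U_{6n}` (of order `3`). -/
def bU (n : ℕ) : U6n n := inl (Multiplicative.ofAdd (1 : ZMod 3))

def u6nEquiv (n : ℕ) : U6n n ≃ ZMod 3 × ZMod (2 * n) where
  toFun g := (Multiplicative.toAdd g.left, Multiplicative.toAdd g.right)
  invFun p := ⟨Multiplicative.ofAdd p.1, Multiplicative.ofAdd p.2⟩
  left_inv g := rfl
  right_inv p := rfl

instance (n : ℕ) [NeZero n] : Fintype (U6n n) :=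
  haveI : NeZero (2 * n) := ⟨by have := NeZero.ne n; omega⟩
  Fintype.ofEquiv _ (u6nEquiv n).symm

/-- An element `a^r b^t` of `U_{6n}` (with `0 ≤ r < 2n`) is even if `r` is even. -/
def IsEvenElt {n : ℕ} (g : U6n n) : Prop := Even (Multiplicative.toAdd g.right).val

/-- The Cayley graph of a group `G` with connection set `S`: `g` and `h` are adjacent
iff `h * g⁻¹ ∈ S` (as a simple graph; for `1 ∉ S = S⁻¹` this is the usual notion). -/
def cayleyGraph {G : Type*} [Group G] (S : Set G) : SimpleGraph G :=
  SimpleGraph.fromRel (fun g h => h * g⁻¹ ∈ S)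

open scoped Classical in
/-- The adjacency matrix of a simple graph, over `ℂ`. -/
noncomputable def adjMat {V : Type*} (Γ : SimpleGraph V) : Matrix V V ℂ :=
  fun g h => if Γ.Adj g h then 1 else 0

/-- A simple graph is integral if every eigenvalue of its adjacency matrix is an integer. -/
def IsIntegral {V : Type*} [Fintype V] [DecidableEq V] (Γ : SimpleGraph V) : Prop :=
  ∀ z ∈ spectrum ℂ (adjMat Γ), ∃ m : ℤ, z = (m : ℂ)

/-- The root of unity `ω = exp(πi/n)`. -/
noncomputable def om (n : ℕ) : ℂ := Complex.exp (Real.pi * Complex.I / n)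

/-- The linear character `χ_j` of `U_{6n}`: `χ_j(a^r b^t) = ω^{jr}`. -/
noncomputable def chi (n j : ℕ) (g : U6n n) : ℂ :=
  om n ^ (j * (Multiplicative.toAdd g.right).val)

/-- The degree-two character `ψ_k` of `U_{6n}`: `ψ_k(a^r b^t)` equals `2ω^{kr}` if `r` is even
and `t = 0`, `-ω^{kr}` if `r` is even and `t ∈ {1,2}`, and `0` if `r` is odd. -/
noncomputable def psi (n k : ℕ) (g : U6n n) : ℂ :=
  if Even (Multiplicative.toAdd g.right).val then
    (if g.left = 1 then 2 else -1) * om n ^ (k * (Multiplicative.toAdd g.right).val)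
  else 0

/-- `f(A) = ∑_{s ∈ A} f(s)`. -/
noncomputable def fsum {α : Type*} (f : α → ℂ) (A : Finset α) : ℂ := ∑ s ∈ A, f s

/-- `f(A²) = ∑_{s,t ∈ A} f(s·t)`. -/
noncomputable def fsum2 {α : Type*} [Mul α] (f : α → ℂ) (A : Finset α) : ℂ :=
  ∑ s ∈ A, ∑ t ∈ A, f (s * t)

/-- The Boolean algebra `B(H)` of a group `H`: the smallest family of subsets of `H`
containing all subgroups and closed under complements, unions and intersections.
`InBoolAlg H s` says `s ∈ B(H)`. -/
inductive InBoolAlg (H : Type*) [Group H] : Set H → Prop where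
  | subgroup (K : Subgroup H) : InBoolAlg H (K : Set H)
  | compl {s : Set H} : InBoolAlg H s → InBoolAlg H sᶜ
  | union {s t : Set H} : InBoolAlg H s → InBoolAlg H t → InBoolAlg H (s ∪ t)
  | inter {s t : Set H} : InBoolAlg H s → InBoolAlg H t → InBoolAlg H (s ∩ t)

/-!
Every homomorphism `χ : G →* ℂ` is an eigenvector of the adjacency matrix of `Cay(G, S)`:
`(A χ)(g) = ∑_{s ∈ S} χ(s g) = χ(S) χ(g)`, and `χ ≠ 0` since `χ(1) = 1`. Since `ω^{2n} = 1`,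
`χ_j` is such a homomorphism on `U_{6n}`, as it factors through `a^r b^t ↦ r ∈ ZMod (2n)`.
-/

open scoped Matrix

theorem _root_.Matrix.mem_spectrum_of_mulVec_eq_smul {K ι : Type*} [Field K] [Fintype ι]
    [DecidableEq ι] {A : Matrix ι ι K} {v : ι → K} {μ : K} (hv : v ≠ 0)
    (hAv : A *ᵥ v = μ • v) : μ ∈ spectrum K A := by
  rw [← Matrix.spectrum_toLin']
  exact (Module.End.hasEigenvalue_of_hasEigenvector
    ⟨Module.End.mem_eigenspace_iff.mpr hAv, hv⟩).mem_spectrum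

theorem _root_.pow_val_add_of_pow_eq_one {M : Type*} [Monoid M] {m : ℕ} [NeZero m] {ζ : M}
    (hζ : ζ ^ m = 1) (a b : ZMod m) : ζ ^ (a + b).val = ζ ^ a.val * ζ ^ b.val := by
  rw [ZMod.val_add, ← pow_eq_pow_mod _ hζ, pow_add]

section Cayley

variable {G : Type*} [Group G]

theorem cayleyGraph_adj_iff {S : Set G} (h1 : (1 : G) ∉ S) (hinv : S⁻¹ = S) {g h : G} :
    (cayleyGraph S).Adj g h ↔ h * g⁻¹ ∈ S := by
  refine ⟨?_, fun hS => ⟨fun hgh => h1 (by simpa [hgh] using hS), Or.inl hS⟩⟩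
  rintro ⟨-, hS | hS⟩
  · exact hS
  · rwa [← hinv, Set.mem_inv, mul_inv_rev, inv_inv]

theorem adjMat_cayleyGraph_mulVec_monoidHom [Fintype G] [DecidableEq G] {S : Finset G}
    (h1 : (1 : G) ∉ S) (hinv : S⁻¹ = S) (χ : G →* ℂ) :
    adjMat (cayleyGraph (S : Set G)) *ᵥ ⇑χ = (∑ s ∈ S, χ s) • ⇑χ := by
  have hinv' : (S : Set G)⁻¹ = S := by rw [← Finset.coe_inv, hinv]
  ext g
  calc (adjMat (cayleyGraph (S : Set G)) *ᵥ ⇑χ) g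
      = ∑ h : G, if h * g⁻¹ ∈ S then χ h else 0 := by
        simp only [Matrix.mulVec, dotProduct, adjMat, cayleyGraph_adj_iff h1 hinv',
          Finset.mem_coe, ite_mul, one_mul, zero_mul]
    _ = ∑ s : G, if s ∈ S then χ s * χ g else 0 :=
        (Fintype.sum_equiv (Equiv.mulRight g) _ _ fun s => by simp).symm
    _ = ((∑ s ∈ S, χ s) • ⇑χ) g := by
        rw [Finset.sum_ite_mem, Finset.univ_inter, ← Finset.sum_mul, Pi.smul_apply, smul_eq_mul]

theorem sum_monoidHom_mem_spectrum_adjMat_cayleyGraph [Fintype G] [DecidableEq G]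
    {S : Finset G} (h1 : (1 : G) ∉ S) (hinv : S⁻¹ = S) (χ : G →* ℂ) :
    ∑ s ∈ S, χ s ∈ spectrum ℂ (adjMat (cayleyGraph (S : Set G))) :=
  Matrix.mem_spectrum_of_mulVec_eq_smul (fun hχ => by simpa using congrFun hχ 1)
    (adjMat_cayleyGraph_mulVec_monoidHom h1 hinv χ)

end Cayley

theorem om_pow_two_mul (n : ℕ) [NeZero n] : om n ^ (2 * n) = 1 := by
  have hn : (n : ℂ) ≠ 0 := Nat.cast_ne_zero.mpr (NeZero.ne n)
  rw [om, ← Complex.exp_nat_mul, ← Complex.exp_two_pi_mul_I]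
  congr 1
  push_cast
  field_simp

noncomputable def chiHom (n j : ℕ) [NeZero n] : U6n n →* ℂ where
  toFun := chi n j
  map_one' := by simp [chi]
  map_mul' g h := by
    have hζ : (om n ^ j) ^ (2 * n) = 1 := by
      rw [← pow_mul, mul_comm j, pow_mul, om_pow_two_mul, one_pow]
    simp only [chi, pow_mul, SemidirectProduct.mul_right, toAdd_mul]
    exact pow_val_add_of_pow_eq_one hζ _ _

theorem chi_sum_is_eigenvalue_general (n : ℕ) [NeZero n] (S : Finset (U6n n))
    (h1 : (1 : U6n n) ∉ S) (hinv : S⁻¹ = S) (j : ℕ) :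
    fsum (chi n j) S ∈ spectrum ℂ (adjMat (cayleyGraph (S : Set (U6n n)))) :=
  sum_monoidHom_mem_spectrum_adjMat_cayleyGraph h1 hinv (chiHom n j)

/-- For `1 ∉ S = S⁻¹` and `0 ≤ j ≤ 2n-1`, the number `χ_j(S) = ∑_{s∈S} χ_j(s)` is an
eigenvalue of the adjacency matrix of `Cay(U_{6n}, S)` over `ℂ`. -/
theorem chi_sum_is_eigenvalue (n : ℕ) [NeZero n] (S : Finset (U6n n))
    (h1 : (1 : U6n n) ∉ S) (hinv : S⁻¹ = S) (j : ℕ) (hj : j ≤ 2 * n - 1) :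
    fsum (chi n j) S ∈ spectrum ℂ (adjMat (cayleyGraph (S : Set (U6n n)))) :=
  chi_sum_is_eigenvalue_general n S h1 hinv j

end U6nPaper
end

section
/- For each integer n > 1, there exists a connected (3n−2)-regular integral simple graph on 6n vertices, i.e., there is a simple graph Γ on a vertex set of cardinality 6n that is connected, regular of degree 3n−2, and all eigenvalues of whose adjacency matrix are integers. -/
open Complex SemidirectProduct Polynomial
open scoped Pointwise

namespace U6nPaper

/-! The graph is `K_{3n,3n}` with each of `n` diagonal blocks `K_{3,3}` thinned to a perfect
matching. Its adjacency matrix is `(J₂ - 1) ⊗ F` with `F = J - K + 1`, where `K` is the indicator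
matrix of the blocks. As `(J₂ - 1)² = 1`, every eigenvalue of the graph squares to an eigenvalue
of `F²`, and the relations `J² = 3n J`, `JK = KJ = 3J`, `K² = 3K` show that `F` is annihilated by
`(X - 1)(X + 2)(X - (3n - 2))`. -/

section Spectrum

variable {A : Type*} [Ring A] [Algebra ℂ A]

theorem isRoot_of_mem_spectrum_of_aeval_eq_zero {b : A} {q : ℂ[X]} (hq : aeval b q = 0)
    {z : ℂ} (hz : z ∈ spectrum ℂ b) : q.IsRoot z := by
  have hmem := spectrum.subset_polynomial_aeval b q ⟨z, hz, rfl⟩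
  rw [hq, spectrum.mem_iff, sub_zero] at hmem
  by_contra h
  exact hmem ((isUnit_iff_ne_zero.mpr h).map (algebraMap ℂ A))

theorem exists_sq_eq_of_mem_spectrum {B : Type*} [Ring B] [Algebra ℂ B] {a : A} {b : B}
    (φ : B →ₐ[ℂ] A) (h : a ^ 2 = φ (b ^ 2)) {z : ℂ} (hz : z ∈ spectrum ℂ a) :
    ∃ w ∈ spectrum ℂ b, z ^ 2 = w ^ 2 := by
  have hz2 := AlgHom.spectrum_apply_subset φ _ (h ▸ spectrum.pow_mem_pow a 2 hz)
  rw [spectrum.map_pow_of_pos b two_pos] at hz2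
  obtain ⟨w, hw, hwz⟩ := hz2
  exact ⟨w, hw, hwz.symm⟩

end Spectrum

open Matrix Kronecker

section Kronecker

variable {m : Type*} [Fintype m]

noncomputable def oneKroneckerAlgHom (l : Type*) [Fintype l] [DecidableEq l] [DecidableEq m] :
    Matrix m m ℂ →ₐ[ℂ] Matrix (l × m) (l × m) ℂ :=
  AlgHom.ofLinearMap (kroneckerBilinear (R := ℂ) 1) one_kronecker_one fun M N => by
    change 1 ⊗ₖ (M * N) = 1 ⊗ₖ M * 1 ⊗ₖ N
    rw [← mul_kronecker_mul, one_mul]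

@[simp]
theorem oneKroneckerAlgHom_apply (l : Type*) [Fintype l] [DecidableEq l] [DecidableEq m]
    (M : Matrix m m ℂ) : oneKroneckerAlgHom l M = 1 ⊗ₖ M := rfl

def allOnes (m : Type*) : Matrix m m ℂ := of fun _ _ => 1

theorem allOnes_mul_allOnes : allOnes m * allOnes m = (Fintype.card m : ℂ) • allOnes m := by
  ext
  simp [allOnes, mul_apply]

theorem allOnes_bool_sub_one_sq : (allOnes Bool - 1) ^ 2 = 1 := by
  rw [sq, sub_mul, mul_sub, mul_sub, allOnes_mul_allOnes, Fintype.card_bool, mul_one, one_mul,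
    mul_one]
  module

end Kronecker

section Iso

variable {V W : Type*} {Γ : SimpleGraph V} {Γ' : SimpleGraph W}

theorem IsIntegral.of_iso [Fintype V] [DecidableEq V] [Fintype W] [DecidableEq W]
    (e : Γ ≃g Γ') (h : IsIntegral Γ') : IsIntegral Γ := by
  have hA : adjMat Γ = (adjMat Γ').submatrix e e := by
    ext v w
    by_cases hvw : Γ.Adj v w
    · rw [submatrix_apply, adjMat, adjMat, if_pos hvw, if_pos (e.map_adj_iff.mpr hvw)]
    · rw [submatrix_apply, adjMat, adjMat, if_neg hvw, if_neg (mt e.map_adj_iff.mp hvw)]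
  rw [IsIntegral, hA, show (adjMat Γ').submatrix e e =
    reindexAlgEquiv ℂ ℂ e.toEquiv.symm (adjMat Γ') from rfl, AlgEquiv.spectrum_eq]
  exact h

theorem ncard_neighborSet_eq_of_iso (e : Γ ≃g Γ') (v : V) :
    (Γ.neighborSet v).ncard = (Γ'.neighborSet (e v)).ncard :=
  Set.ncard_congr' (e.mapNeighborSet v)

end Iso

def bipartiteBlockGraph (ι κ : Type*) : SimpleGraph (Bool × ι × κ) where
  Adj p q := p.1 ≠ q.1 ∧ (p.2.1 = q.2.1 → p.2.2 = q.2.2)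
  symm := ⟨fun _ _ h => ⟨h.1.symm, fun h1 => (h.2 h1.symm).symm⟩⟩
  loopless := ⟨fun _ h => h.1 rfl⟩

noncomputable def blockBiadjMatrix (ι κ : Type*) [DecidableEq ι] [DecidableEq κ] :
    Matrix (ι × κ) (ι × κ) ℂ :=
  allOnes ι ⊗ₖ allOnes κ - 1 ⊗ₖ allOnes κ + 1

section BlockGraph

variable {ι κ : Type*}

theorem reachable_bipartiteBlockGraph_of_ne {i j : ι} (hij : i ≠ j) (a b : Bool) (u v : κ) :
    (bipartiteBlockGraph ι κ).Reachable (a, i, u) (b, j, v) := by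
  by_cases hab : a = b
  · subst hab
    have h₁ : (bipartiteBlockGraph ι κ).Adj (a, i, u) (!a, j, v) :=
      ⟨by simp, fun h => absurd h hij⟩
    have h₂ : (bipartiteBlockGraph ι κ).Adj (!a, j, v) (a, j, v) := ⟨by simp, fun _ => rfl⟩
    exact h₁.reachable.trans h₂.reachable
  · exact SimpleGraph.Adj.reachable ⟨hab, fun h => absurd h hij⟩

theorem connected_bipartiteBlockGraph [Nontrivial ι] [Nonempty κ] :
    (bipartiteBlockGraph ι κ).Connected := by
  rw [SimpleGraph.connected_iff]
  refine ⟨?_, inferInstance⟩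
  rintro ⟨a, i, u⟩ ⟨b, j, v⟩
  by_cases hij : i = j
  · obtain ⟨k, hki⟩ := exists_ne i
    exact (reachable_bipartiteBlockGraph_of_ne hki.symm a a u u).trans
      (reachable_bipartiteBlockGraph_of_ne (hij ▸ hki) a b u v)
  · exact reachable_bipartiteBlockGraph_of_ne hij a b u v

variable [DecidableEq ι] [DecidableEq κ]

theorem adjMat_bipartiteBlockGraph :
    adjMat (bipartiteBlockGraph ι κ) = (allOnes Bool - 1) ⊗ₖ blockBiadjMatrix ι κ := by
  ext ⟨a, i, u⟩ ⟨b, j, v⟩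
  simp only [adjMat, bipartiteBlockGraph, blockBiadjMatrix, allOnes, kronecker_apply,
    Matrix.add_apply, Matrix.sub_apply, of_apply, one_apply, Prod.mk.injEq]
  by_cases hab : a = b <;> by_cases hij : i = j <;> by_cases huv : u = v <;> simp [hab, hij, huv]

variable [Fintype ι] [Fintype κ]

theorem ncard_neighborSet_bipartiteBlockGraph (p : Bool × ι × κ) :
    ((bipartiteBlockGraph ι κ).neighborSet p).ncard =
      (Fintype.card ι - 1) * Fintype.card κ + 1 := by
  obtain ⟨a, i, u⟩ := p
  have hN : (bipartiteBlockGraph ι κ).neighborSet (a, i, u) =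
      Prod.mk (!a) '' ↑(({i}ᶜ ×ˢ Finset.univ ∪ {(i, u)} : Finset (ι × κ))) := by
    ext ⟨b, j, v⟩
    cases a <;> cases b <;> simp [bipartiteBlockGraph] <;> tauto
  rw [hN, Set.ncard_image_of_injective _ (Prod.mk_right_injective _), Set.ncard_coe_finset,
    Finset.card_union_of_disjoint (by simp), Finset.card_product, Finset.card_compl,
    Finset.card_singleton, Finset.card_singleton, Finset.card_univ]

theorem blockBiadjMatrix_cubic_eq_zero :
    (blockBiadjMatrix ι κ - 1) * (blockBiadjMatrix ι κ - (1 - Fintype.card κ : ℂ) • 1) *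
      (blockBiadjMatrix ι κ - ((Fintype.card ι - 1) * Fintype.card κ + 1 : ℂ) • 1) = 0 := by
  set c : ℂ := (Fintype.card κ : ℂ)
  set P : Matrix (ι × κ) (ι × κ) ℂ := allOnes ι ⊗ₖ allOnes κ
  set Q : Matrix (ι × κ) (ι × κ) ℂ := 1 ⊗ₖ allOnes κ
  have hPP : P * P = ((Fintype.card ι : ℂ) * c) • P := by
    rw [← mul_kronecker_mul, allOnes_mul_allOnes, allOnes_mul_allOnes, smul_kronecker,
      kronecker_smul, smul_smul]
  have hPQ : P * Q = c • P := by
    rw [← mul_kronecker_mul, mul_one, allOnes_mul_allOnes, kronecker_smul]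
  have hQP : Q * P = c • P := by
    rw [← mul_kronecker_mul, one_mul, allOnes_mul_allOnes, kronecker_smul]
  have hQQ : Q * Q = c • Q := by
    rw [← mul_kronecker_mul, one_mul, allOnes_mul_allOnes, kronecker_smul]
  have hquad : (P - Q) * (P - Q + c • 1) = ((Fintype.card ι - 1) * c : ℂ) • P := by
    simp only [sub_mul, mul_sub, mul_add, mul_smul_comm, mul_one, hPP, hPQ, hQP, hQQ]
    module
  have hlin : P * (P - Q - ((Fintype.card ι - 1) * c : ℂ) • 1) = 0 := by
    rw [mul_sub, mul_sub, hPP, hPQ, mul_smul_comm, mul_one]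
    module
  have e₁ : P - Q + 1 - 1 = P - Q := add_sub_cancel_right _ _
  have e₂ : P - Q + 1 - (1 - c) • 1 = P - Q + c • 1 := by module
  have e₃ : P - Q + 1 - ((Fintype.card ι - 1) * c + 1 : ℂ) • 1 =
      P - Q - ((Fintype.card ι - 1) * c : ℂ) • 1 := by module
  rw [show blockBiadjMatrix ι κ = P - Q + 1 from rfl, e₁, e₂, e₃, hquad, smul_mul_assoc, hlin,
    smul_zero]

theorem mem_spectrum_blockBiadjMatrix {w : ℂ} (hw : w ∈ spectrum ℂ (blockBiadjMatrix ι κ)) :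
    w = 1 ∨ w = 1 - Fintype.card κ ∨ w = (Fintype.card ι - 1) * Fintype.card κ + 1 := by
  set q : ℂ[X] := (X - C 1) * (X - C (1 - Fintype.card κ : ℂ)) *
      (X - C ((Fintype.card ι - 1) * Fintype.card κ + 1 : ℂ))
  have hq : aeval (blockBiadjMatrix ι κ) q = 0 := by
    have haeval (a : ℂ) :
        aeval (blockBiadjMatrix ι κ) (X - C a) = blockBiadjMatrix ι κ - a • 1 := by
      rw [map_sub, aeval_X, aeval_C, Algebra.algebraMap_eq_smul_one]
    rw [map_mul, map_mul, haeval, haeval, haeval, one_smul]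
    exact blockBiadjMatrix_cubic_eq_zero
  have hroot := isRoot_of_mem_spectrum_of_aeval_eq_zero hq hw
  simpa only [q, IsRoot, eval_mul, eval_sub, eval_X, eval_C, mul_eq_zero, sub_eq_zero,
    or_assoc] using hroot

theorem isIntegral_bipartiteBlockGraph : IsIntegral (bipartiteBlockGraph ι κ) := by
  intro z hz
  have hsq : adjMat (bipartiteBlockGraph ι κ) ^ 2 =
      oneKroneckerAlgHom Bool (blockBiadjMatrix ι κ ^ 2) := by
    rw [adjMat_bipartiteBlockGraph, oneKroneckerAlgHom_apply, sq, sq, ← mul_kronecker_mul, ← sq,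
      allOnes_bool_sub_one_sq]
  obtain ⟨w, hw, hzw⟩ := exists_sq_eq_of_mem_spectrum _ hsq hz
  obtain ⟨m, rfl⟩ : ∃ m : ℤ, w = m := by
    rcases mem_spectrum_blockBiadjMatrix hw with rfl | rfl | rfl
    · exact ⟨1, by simp⟩
    · exact ⟨1 - Fintype.card κ, by simp⟩
    · exact ⟨(Fintype.card ι - 1) * Fintype.card κ + 1, by simp⟩
  rcases sq_eq_sq_iff_eq_or_eq_neg.mp hzw with rfl | rfl
  · exact ⟨m, rfl⟩
  · exact ⟨-m, by simp⟩

end BlockGraph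

/-- For each integer `n > 1` there is a connected `(3n-2)`-regular integral graph
on `6n` vertices. -/
theorem exists_connected_regular_integral_6n' (n : ℕ) (hn : 1 < n) :
    ∃ Γ : SimpleGraph (Fin (6 * n)),
      Γ.Connected ∧ (∀ v, (Γ.neighborSet v).ncard = 3 * n - 2) ∧ IsIntegral Γ := by
  have : Nontrivial (Fin n) := Fin.nontrivial_iff_two_le.mpr hn
  let e : Fin (6 * n) ≃ Bool × Fin n × Fin 3 := Fintype.equivOfCardEq (by
    simp only [Fintype.card_fin, Fintype.card_prod, Fintype.card_bool]; ring)
  let φ := SimpleGraph.Iso.comap e (bipartiteBlockGraph (Fin n) (Fin 3))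
  refine ⟨_, φ.connected_iff.mpr connected_bipartiteBlockGraph, fun v => ?_,
    isIntegral_bipartiteBlockGraph.of_iso φ⟩
  rw [ncard_neighborSet_eq_of_iso φ, ncard_neighborSet_bipartiteBlockGraph, Fintype.card_fin,
    Fintype.card_fin]
  omega

end U6nPaper
end

section
/- Let n > 1 be an integer and S = S₁ ∪ S₂ ⊆ U_{6n}, where S₁ = {a^{2r}, a^{2r}b, a^{2r}b² : 1 ≤ r ≤ n−1} and S₂ = {a^{2h+1}, a^{2h+1}b, a^{2h+1}b² : 0 ≤ h ≤ n−1}. Then Cay(U_{6n}, S) is a connected integral graph, and the characteristic polynomial of its adjacency matrix equals (X+3)^{2n−1} · X^{4n} · (X−(6n−3)). -/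
/-!
Every element outside `⟨b⟩` lies in `S₁ ∪ S₂`, so `S₁ ∪ S₂ = U₆ₙ ∖ ⟨b⟩` and `Cay(U₆ₙ, S₁ ∪ S₂)` is
the complete multipartite graph whose parts are the `2n` cosets of `⟨b⟩`, i.e. the complete
equipartite graph `K_{2n}(3)`, with adjacency matrix `A = J − I ⊗ J₃`. The matrix
determinant lemma, in the form `det (M + aJ) = det M · (1 + N a / c)` for `M` with constant row
sums `c`, applied first to `zI + J₃` and then to `zI − A = I ⊗ (zI + J₃) − J`, evaluates
`det (zI − A)` for every `z ∉ {0, −3}`. A polynomial is determined by its values at infinitely many points, which gives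
the characteristic polynomial and with it the integral spectrum.
-/

open Complex SemidirectProduct Polynomial
open scoped Pointwise

namespace Matrix

variable {K m : Type*} [Field K] [Fintype m] [DecidableEq m]

theorem det_add_const_of_sum_row_eq (M : Matrix m m K) {c : K} (hc : c ≠ 0)
    (hM : ∀ i, ∑ j, M i j = c) (a : K) :
    (M + of fun _ _ => a).det = M.det * (1 + Fintype.card m * a / c) := by
  have hfactor : M + of (fun _ _ => a) =
      M * (1 + replicateCol Unit (fun _ => a / c) * replicateRow Unit (1 : m → K)) := by
    rw [Matrix.mul_add, Matrix.mul_one, ← Matrix.mul_assoc]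
    congr 1
    ext i j
    simp [mul_apply, ← Finset.sum_mul, hM, mul_div_cancel₀ _ hc]
  rw [hfactor, det_mul, det_one_add_replicateCol_mul_replicateRow]
  simp [dotProduct, mul_div_assoc]

theorem det_scalar_add_const {z : K} (hz : z ≠ 0) (a : K) :
    (scalar m z + of fun _ _ => a).det = z ^ Fintype.card m * (1 + Fintype.card m * a / z) := by
  rw [det_add_const_of_sum_row_eq _ hz]
  · simp
  · intro i
    simp [diagonal_apply]

end Matrix

namespace SimpleGraph

open Matrix
open scoped Kronecker

variable {K : Type*} [Field K] {r t : ℕ}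

theorem adjMatrix_completeEquipartiteGraph :
    (completeEquipartiteGraph r t).adjMatrix K = of fun v w => if v.1 = w.1 then 0 else 1 := by
  ext v w
  simp [adjMatrix_apply, ite_not]

theorem det_scalar_sub_adjMatrix_completeEquipartiteGraph (hr : 0 < r) (ht : 0 < t) {z : K}
    (hz : z ≠ 0) (hzt : z + t ≠ 0) :
    (scalar _ z - (completeEquipartiteGraph r t).adjMatrix K).det =
      (z + t) ^ (r - 1) * z ^ (r * (t - 1)) * (z - ((r - 1) * t : ℕ)) := by
  set B : Matrix (Fin r × Fin t) (Fin r × Fin t) K := 1 ⊗ₖ (scalar (Fin t) z + of fun _ _ => 1)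
  have hB : scalar _ z - (completeEquipartiteGraph r t).adjMatrix K = B + of fun _ _ => -1 := by
    ext ⟨i, j⟩ ⟨i', j'⟩
    by_cases hi : i = i' <;> by_cases hj : j = j' <;>
      simp [B, adjMatrix_completeEquipartiteGraph, kroneckerMap_apply, one_apply, hi, hj]
  have hBrow : ∀ v, ∑ w, B v w = z + t := by
    rintro ⟨i, j⟩
    simp [B, Fintype.sum_prod_type, kroneckerMap_apply, one_apply, diagonal_apply,
      Finset.sum_add_distrib]
  rw [hB, det_add_const_of_sum_row_eq B hzt hBrow, det_kronecker, det_scalar_add_const hz]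
  obtain ⟨r, rfl⟩ : ∃ r', r = r' + 1 := ⟨r - 1, by omega⟩
  obtain ⟨t, rfl⟩ : ∃ t', t = t' + 1 := ⟨t - 1, by omega⟩
  have hblock : z ^ (t + 1) * (1 + ((t + 1 : ℕ) : K) * 1 / z) = z ^ t * (z + (t + 1 : ℕ)) := by
    field_simp
    ring
  simp only [det_one, one_pow, one_mul, Fintype.card_prod, Fintype.card_fin, hblock]
  simp only [Nat.add_sub_cancel, mul_pow, ← pow_mul]
  rw [pow_succ (z + _) r]
  field_simp
  push_cast
  ring

theorem charpoly_adjMatrix_completeEquipartiteGraph [Infinite K] (hr : 0 < r) (ht : 0 < t) :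
    ((completeEquipartiteGraph r t).adjMatrix K).charpoly =
      (X + C (t : K)) ^ (r - 1) * X ^ (r * (t - 1)) * (X - C (((r - 1) * t : ℕ) : K)) := by
  apply eq_of_infinite_eval_eq
  have hfinite : ({0, -(t : K)} : Set K).Finite := Set.toFinite _
  refine hfinite.infinite_compl.mono fun z hz => ?_
  simp only [Set.mem_compl_iff, Set.mem_insert_iff, Set.mem_singleton_iff, not_or,
    ← add_eq_zero_iff_eq_neg] at hz
  rw [Set.mem_ofPred_eq, eval_charpoly,
    det_scalar_sub_adjMatrix_completeEquipartiteGraph hr ht hz.1 hz.2]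
  simp

theorem completeEquipartiteGraph_connected (hr : 1 < r) (ht : 0 < t) :
    (completeEquipartiteGraph r t).Connected := by
  have : Nontrivial (Fin r) := Fin.nontrivial_iff_two_le.mpr hr
  refine (connected_iff _).mpr ⟨fun v w => ?_, ⟨(⟨0, by omega⟩, ⟨0, ht⟩)⟩⟩
  by_cases hvw : v.1 = w.1
  · obtain ⟨i, hi⟩ := exists_ne v.1
    have hv : (completeEquipartiteGraph r t).Adj v (i, w.2) := Ne.symm hi
    have hw : (completeEquipartiteGraph r t).Adj (i, w.2) w := show i ≠ w.1 from hvw ▸ hi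
    exact hv.reachable.trans hw.reachable
  · exact Adj.reachable hvw

end SimpleGraph

namespace U6nPaper

open SimpleGraph

section IntegralGraph

theorem adjMat_eq_adjMatrix {V : Type*} (Γ : SimpleGraph V) [DecidableRel Γ.Adj] :
    adjMat Γ = Γ.adjMatrix ℂ := by
  ext v w
  simp [adjMat, adjMatrix_apply]

variable {V V' : Type*} [Fintype V] [DecidableEq V] [Fintype V'] [DecidableEq V']

theorem charpoly_adjMat_eq_of_iso {Γ : SimpleGraph V} {Γ' : SimpleGraph V'} (e : Γ ≃g Γ') :
    (adjMat Γ).charpoly = (adjMat Γ').charpoly := by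
  classical
  rw [adjMat_eq_adjMatrix, adjMat_eq_adjMatrix, ← Iso.reindex_adjMatrix ℂ e,
    Matrix.charpoly_reindex]

theorem isIntegral_iff_isRoot_charpoly (Γ : SimpleGraph V) :
    IsIntegral Γ ↔ ∀ z, (adjMat Γ).charpoly.IsRoot z → ∃ m : ℤ, z = m := by
  simp only [IsIntegral, Matrix.mem_spectrum_iff_isRoot_charpoly]

theorem isIntegral_iff_of_iso {Γ : SimpleGraph V} {Γ' : SimpleGraph V'} (e : Γ ≃g Γ') :
    IsIntegral Γ ↔ IsIntegral Γ' := by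
  rw [isIntegral_iff_isRoot_charpoly, isIntegral_iff_isRoot_charpoly, charpoly_adjMat_eq_of_iso e]

theorem isIntegral_completeEquipartiteGraph {r t : ℕ} (hr : 0 < r) (ht : 0 < t) :
    IsIntegral (completeEquipartiteGraph r t) := by
  rw [isIntegral_iff_isRoot_charpoly, adjMat_eq_adjMatrix,
    charpoly_adjMatrix_completeEquipartiteGraph hr ht]
  intro z hz
  simp only [IsRoot, eval_mul, eval_pow, eval_add, eval_sub, eval_X, eval_C, mul_eq_zero,
    pow_eq_zero_iff', sub_eq_zero] at hz
  rcases hz with ((⟨hz, -⟩ | ⟨rfl, -⟩) | hz)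
  · exact ⟨-t, by push_cast; linear_combination hz⟩
  · exact ⟨0, by simp⟩
  · exact ⟨((r - 1) * t : ℕ), by simp [hz]⟩

end IntegralGraph

theorem cayleyGraph_setOf_ne_one_adj {G Q : Type*} [Group G] [Group Q] (f : G →* Q) (x y : G) :
    (cayleyGraph {g | f g ≠ 1}).Adj x y ↔ f x ≠ f y := by
  simp only [cayleyGraph, fromRel_adj, Set.mem_ofPred_eq, map_mul, map_inv, ne_eq,
    mul_inv_eq_one]
  constructor
  · rintro ⟨-, hyx | hxy⟩
    exacts [Ne.symm hyx, hxy]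
  · intro hxy
    exact ⟨fun h => hxy (congrArg f h), Or.inr hxy⟩

section U6n

open Multiplicative

variable {n : ℕ}

theorem aU_pow (k : ℕ) : aU n ^ k = inr (ofAdd (k : ZMod (2 * n))) := by
  rw [aU, ← map_pow, ← ofAdd_nsmul, nsmul_one]

theorem bU_pow (t : ℕ) : bU n ^ t = inl (ofAdd (t : ZMod 3)) := by
  rw [bU, ← map_pow, ← ofAdd_nsmul, nsmul_one]

theorem right_aU_pow_mul_bU_pow (k t : ℕ) :
    (aU n ^ k * bU n ^ t).right = ofAdd (k : ZMod (2 * n)) := by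
  rw [aU_pow, bU_pow, mul_right, right_inr, right_inl, mul_one]

theorem exists_eq_aU_pow_mul_bU_pow [NeZero n] (g : U6n n) :
    ∃ k < 2 * n, ∃ t < 3, g = aU n ^ k * bU n ^ t := by
  set y := (inr g.right)⁻¹ * g
  have hy : y = inl y.left := by
    conv_lhs => rw [← inl_left_mul_inr_right y]
    simp [y]
  refine ⟨(toAdd g.right).val, ZMod.val_lt _, (toAdd y.left).val, ZMod.val_lt _, ?_⟩
  rw [aU_pow, bU_pow, ZMod.natCast_zmod_val, ZMod.natCast_zmod_val, ofAdd_toAdd, ofAdd_toAdd,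
    ← hy, mul_inv_cancel_left]

theorem right_aU_pow_mul_bU_pow_eq_one_iff (k t : ℕ) :
    (aU n ^ k * bU n ^ t).right = 1 ↔ 2 * n ∣ k := by
  rw [right_aU_pow_mul_bU_pow, ofAdd_eq_one, ZMod.natCast_eq_zero_iff]

theorem right_ne_one_iff [NeZero n] (g : U6n n) :
    g.right ≠ 1 ↔ ∃ k, 0 < k ∧ k < 2 * n ∧ ∃ t < 3, g = aU n ^ k * bU n ^ t := by
  constructor
  · intro hg
    obtain ⟨k, hk, t, ht, rfl⟩ := exists_eq_aU_pow_mul_bU_pow g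
    refine ⟨k, Nat.pos_of_ne_zero ?_, hk, t, ht, rfl⟩
    rintro rfl
    exact hg ((right_aU_pow_mul_bU_pow_eq_one_iff 0 t).mpr (dvd_zero _))
  · rintro ⟨k, hk0, hk, t, -, rfl⟩
    rw [ne_eq, right_aU_pow_mul_bU_pow_eq_one_iff]
    exact Nat.not_dvd_of_pos_of_lt hk0 hk

theorem eq_aU_pow_or_eq_aU_pow_mul_bU_or_eq_aU_pow_mul_bU_sq_iff (x : U6n n) (k : ℕ) :
    (x = aU n ^ k ∨ x = aU n ^ k * bU n ∨ x = aU n ^ k * bU n ^ 2) ↔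
      ∃ t < 3, x = aU n ^ k * bU n ^ t := by
  constructor
  · rintro (rfl | rfl | rfl)
    exacts [⟨0, by simp⟩, ⟨1, by simp⟩, ⟨2, by simp⟩]
  · rintro ⟨t, ht, rfl⟩
    interval_cases t <;> simp

theorem exists_even_or_exists_odd_iff (hn : 0 < n) (P : ℕ → Prop) :
    ((∃ r, 1 ≤ r ∧ r ≤ n - 1 ∧ P (2 * r)) ∨ ∃ h, h ≤ n - 1 ∧ P (2 * h + 1)) ↔
      ∃ k, 0 < k ∧ k < 2 * n ∧ P k := by
  constructor
  · rintro (⟨r, hr1, hr, hP⟩ | ⟨h, hh, hP⟩)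
    exacts [⟨2 * r, by omega, by omega, hP⟩, ⟨2 * h + 1, by omega, by omega, hP⟩]
  · rintro ⟨k, hk0, hk, hP⟩
    rcases Nat.even_or_odd' k with ⟨r, rfl | rfl⟩
    exacts [Or.inl ⟨r, by omega, by omega, hP⟩, Or.inr ⟨r, by omega, hP⟩]

theorem union_eq_setOf_right_ne_one [NeZero n] (S₁ S₂ : Set (U6n n))
    (hS₁ : S₁ = {x | ∃ r : ℕ, 1 ≤ r ∧ r ≤ n - 1 ∧
      (x = aU n ^ (2 * r) ∨ x = aU n ^ (2 * r) * bU n ∨ x = aU n ^ (2 * r) * bU n ^ 2)})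
    (hS₂ : S₂ = {x | ∃ h : ℕ, h ≤ n - 1 ∧
      (x = aU n ^ (2 * h + 1) ∨ x = aU n ^ (2 * h + 1) * bU n ∨
        x = aU n ^ (2 * h + 1) * bU n ^ 2)}) :
    S₁ ∪ S₂ = {g | g.right ≠ 1} := by
  ext g
  simp only [hS₁, hS₂, Set.mem_union, Set.mem_ofPred_eq, right_ne_one_iff,
    eq_aU_pow_or_eq_aU_pow_mul_bU_or_eq_aU_pow_mul_bU_sq_iff]
  exact exists_even_or_exists_odd_iff (Nat.pos_of_neZero n)
    (fun k => ∃ t < 3, g = aU n ^ k * bU n ^ t)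

end U6n

def isoCompleteEquipartiteGraph (n : ℕ) [NeZero n] :
    cayleyGraph {g : U6n n | g.right ≠ 1} ≃g completeEquipartiteGraph (2 * n) 3 where
  toEquiv := (u6nEquiv n).trans ((Equiv.prodComm _ _).trans
    ((ZMod.finEquiv (2 * n)).symm.toEquiv.prodCongr (ZMod.finEquiv 3).symm.toEquiv))
  map_rel_iff' {g h} := by
    refine Iff.trans ?_ (cayleyGraph_setOf_ne_one_adj rightHom g h).symm
    simp [u6nEquiv]

/-- Corollary 4.6: for `n > 1`, `S₁ = {a^{2r}, a^{2r}b, a^{2r}b² : 1 ≤ r ≤ n-1}` and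
`S₂ = {a^{2h+1}, a^{2h+1}b, a^{2h+1}b² : 0 ≤ h ≤ n-1}`, the graph `Cay(U_{6n}, S₁ ∪ S₂)` is
connected and integral with spectrum `{[-3]^{2n-1}, [0]^{4n}, 6n-3}`. -/
theorem corollary_4_6 (n : ℕ) (hn : 1 < n) (S₁ S₂ : Set (U6n n))
    (hS₁ : S₁ = {x | ∃ r : ℕ, 1 ≤ r ∧ r ≤ n - 1 ∧
      (x = aU n ^ (2 * r) ∨ x = aU n ^ (2 * r) * bU n ∨ x = aU n ^ (2 * r) * bU n ^ 2)})
    (hS₂ : S₂ = {x | ∃ h : ℕ, h ≤ n - 1 ∧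
      (x = aU n ^ (2 * h + 1) ∨ x = aU n ^ (2 * h + 1) * bU n ∨
        x = aU n ^ (2 * h + 1) * bU n ^ 2)}) :
    haveI : NeZero n := ⟨by omega⟩
    (cayleyGraph (S₁ ∪ S₂)).Connected ∧
    IsIntegral (cayleyGraph (S₁ ∪ S₂)) ∧
    (adjMat (cayleyGraph (S₁ ∪ S₂))).charpoly =
      (X + 3) ^ (2 * n - 1) * X ^ (4 * n) * (X - C (6 * (n : ℂ) - 3)) := by
  have : NeZero n := ⟨by omega⟩
  rw [union_eq_setOf_right_ne_one S₁ S₂ hS₁ hS₂]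
  let e := isoCompleteEquipartiteGraph n
  refine ⟨e.connected_iff.mpr (completeEquipartiteGraph_connected (by omega) (by omega)),
    (isIntegral_iff_of_iso e).mpr (isIntegral_completeEquipartiteGraph (by omega) (by omega)), ?_⟩
  rw [charpoly_adjMat_eq_of_iso e, adjMat_eq_adjMatrix,
    charpoly_adjMatrix_completeEquipartiteGraph (by omega) (by omega)]
  have hroot : (((2 * n - 1) * 3 : ℕ) : ℂ) = 6 * n - 3 := by
    push_cast [Nat.one_le_iff_ne_zero.mpr (NeZero.ne (2 * n))]
    ring
  rw [show 2 * n * (3 - 1) = 4 * n by omega, hroot, Nat.cast_ofNat, map_ofNat C 3]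

end U6nPaper
end

section
/- Let S = S₁ ∪ S₂ ⊆ U_{6n} ∖ {1}, where every element of S₁ is even and every element of S₂ is odd. Then for every 0 ≤ k ≤ n−1: ψ_k(S) = ψ_k(S₁) and ψ_k(S²) = ψ_k(S₁²) + ψ_k(S₂²). -/
open Complex SemidirectProduct Polynomial
open scoped Pointwise

namespace U6nPaper

theorem fsum_union_eq_left {α : Type*} [DecidableEq α] (s : Set α) {f : α → ℂ}
    {S₁ S₂ : Finset α} (hf : ∀ g ∉ s, f g = 0) (hS₂ : ∀ g ∈ S₂, g ∉ s) :
    fsum f (S₁ ∪ S₂) = fsum f S₁ :=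
  Finset.sum_union_eq_left fun g hg _ => hf g (hS₂ g hg)

section SubgroupSupport

variable {G : Type*} [Group G] [DecidableEq G] (H : Subgroup G) {f : G → ℂ} {S₁ S₂ : Finset G}

-- The cross products `S₁ S₂` and `S₂ S₁` lie outside `H`, where `f` vanishes.
theorem fsum2_union_eq_add (hf : ∀ g ∉ H, f g = 0)
    (hS₁ : ∀ g ∈ S₁, g ∈ H) (hS₂ : ∀ g ∈ S₂, g ∉ H) :
    fsum2 f (S₁ ∪ S₂) = fsum2 f S₁ + fsum2 f S₂ := by
  have hdisj : Disjoint S₁ S₂ :=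
    Finset.disjoint_left.mpr fun g hg₁ hg₂ => hS₂ g hg₂ (hS₁ g hg₁)
  have cross₁₂ : ∀ s ∈ S₁, ∑ t ∈ S₂, f (s * t) = 0 := fun s hs =>
    Finset.sum_eq_zero fun t ht =>
      hf _ fun hst => hS₂ t ht ((H.mul_mem_cancel_left (hS₁ s hs)).mp hst)
  have cross₂₁ : ∀ s ∈ S₂, ∑ t ∈ S₁, f (s * t) = 0 := fun s hs =>
    Finset.sum_eq_zero fun t ht =>
      hf _ fun hst => hS₂ s hs ((H.mul_mem_cancel_right (hS₁ t ht)).mp hst)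
  unfold fsum2
  rw [Finset.sum_union hdisj]
  congr 1
  · refine Finset.sum_congr rfl fun s hs => ?_
    rw [Finset.sum_union hdisj, cross₁₂ s hs, add_zero]
  · refine Finset.sum_congr rfl fun s hs => ?_
    rw [Finset.sum_union hdisj, cross₂₁ s hs, zero_add]

end SubgroupSupport

/-- `a^r b^t ↦ r mod 2`. -/
def parityHom (n : ℕ) : U6n n →* Multiplicative (ZMod 2) :=
  (AddMonoidHom.toMultiplicative (ZMod.castHom (dvd_mul_right 2 n) (ZMod 2)).toAddMonoidHom).comp
    rightHom

theorem isEvenElt_iff_mem_ker_parityHom {n : ℕ} [NeZero n] (g : U6n n) :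
    IsEvenElt g ↔ g ∈ (parityHom n).ker := by
  rw [MonoidHom.mem_ker, IsEvenElt, ← ZMod.natCast_eq_zero_iff_even, ZMod.natCast_val]
  rfl

theorem psi_eq_zero_of_not_mem_ker {n : ℕ} [NeZero n] (k : ℕ) :
    ∀ g ∉ (parityHom n).ker, psi n k g = 0 := fun g hg =>
  if_neg (mt (isEvenElt_iff_mem_ker_parityHom g).mp hg)

theorem psi_sum_split_general (n : ℕ) [NeZero n] (S₁ S₂ : Finset (U6n n))
    (hS₁ : ∀ g ∈ S₁, IsEvenElt g) (hS₂ : ∀ g ∈ S₂, ¬ IsEvenElt g)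
    (k : ℕ) :
    fsum (psi n k) (S₁ ∪ S₂) = fsum (psi n k) S₁ ∧
    fsum2 (psi n k) (S₁ ∪ S₂) = fsum2 (psi n k) S₁ + fsum2 (psi n k) S₂ := by
  simp only [isEvenElt_iff_mem_ker_parityHom] at hS₁ hS₂
  exact ⟨fsum_union_eq_left (parityHom n).ker (psi_eq_zero_of_not_mem_ker k) hS₂,
    fsum2_union_eq_add (parityHom n).ker (psi_eq_zero_of_not_mem_ker k) hS₁ hS₂⟩

/-- For `S = S₁ ∪ S₂ ⊆ U_{6n} ∖ {1}` with `S₁` consisting of even elements and `S₂` of odd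
elements, `ψ_k(S) = ψ_k(S₁)` and `ψ_k(S²) = ψ_k(S₁²) + ψ_k(S₂²)` for all `0 ≤ k ≤ n-1`. -/
theorem psi_sum_split (n : ℕ) [NeZero n] (S₁ S₂ : Finset (U6n n))
    (hS₁ : ∀ g ∈ S₁, IsEvenElt g) (hS₂ : ∀ g ∈ S₂, ¬ IsEvenElt g)
    (h1 : (1 : U6n n) ∉ S₁ ∪ S₂) (k : ℕ) (hk : k ≤ n - 1) :
    fsum (psi n k) (S₁ ∪ S₂) = fsum (psi n k) S₁ ∧
    fsum2 (psi n k) (S₁ ∪ S₂) = fsum2 (psi n k) S₁ + fsum2 (psi n k) S₂ :=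
  psi_sum_split_general n S₁ S₂ hS₁ hS₂ k

end U6nPaper
end
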